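/- arXiv:1301.6509 — 2 statements merged into one kernel-verified Lean document; each statement's English description precedes it below -/
import Mathlib

section
/- Let σ be a connected non-crossing RGF, and let τ be a non-crossing RGF of the form 1[ρ] for some RGF ρ (i.e., the letter 1 occurs exactly once in τ, at the first position). Suppose that for every n the number of non-crossing RGFs of length n avoiding σ equals the number of non-crossing RGFs of length n avoiding τ. Then for every n, the number of non-crossing RGFs of length n avoiding 1[σ] equals the number of non-crossing RGFs of length n avoiding τ1 = 1[ρ]1 (the pattern τ with an additional letter 1 appended at the end). -/
/-- A restricted growth function (canonical sequential form of a set partition):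
a word over the positive integers whose first letter is 1 and where each letter
is at most one more than the maximum of the preceding letters. -/
def IsRGF (w : List ℕ) : Prop :=
  (∀ x ∈ w, 1 ≤ x) ∧
  (w ≠ [] → w.getD 0 0 = 1) ∧
  ∀ i, i + 1 < w.length → w.getD (i + 1) 0 ≤ ((w.take (i + 1)).foldr max 0) + 1

/-- Two words of the same length are order-isomorphic: corresponding entries
compare the same way (this preserves equalities as well). -/
def WordOrdIso (s t : List ℕ) : Prop :=
  s.length = t.length ∧
  ∀ i j, i < s.length → j < s.length →
    (s.getD i 0 < s.getD j 0 ↔ t.getD i 0 < t.getD j 0)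

/-- `w` contains the pattern `p`: a subsequence of `w` is order-isomorphic to `p`. -/
def PatContains (w p : List ℕ) : Prop := ∃ s : List ℕ, s.Sublist w ∧ WordOrdIso s p

/-- `w` avoids the pattern `p`. -/
def PatAvoids (w p : List ℕ) : Prop := ¬ PatContains w p

/-- `pCount n T` = number of RGFs of length `n` avoiding every pattern in `T`. -/
noncomputable def pCount (n : ℕ) (T : Set (List ℕ)) : ℕ :=
  {w : List ℕ | IsRGF w ∧ w.length = n ∧ ∀ p ∈ T, PatAvoids w p}.ncard

/-- A word is non-crossing if it avoids the pattern 1212. -/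
def NonCrossing (w : List ℕ) : Prop := PatAvoids w [1,2,1,2]

/-- The number of distinct letters of an RGF equals its maximum letter. -/
def nLetters (w : List ℕ) : ℕ := w.foldr max 0

/-- `rgfComp a b` is the pattern `a[b]`: `a` followed by `b` shifted up by the
number of distinct letters of `a`. -/
def rgfComp (a b : List ℕ) : List ℕ := a ++ b.map (· + nLetters a)

/-- A connected RGF: nonempty and not expressible as `σ[τ]` with `σ, τ` nonempty RGFs. -/
def Connected (w : List ℕ) : Prop :=
  w ≠ [] ∧ ¬ ∃ a b : List ℕ, IsRGF a ∧ IsRGF b ∧ a ≠ [] ∧ b ≠ [] ∧ w = rgfComp a b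

/-- `w` decomposes as `σ₁[σ₂]⋯[σ_p]` with each `σ_i` a connected RGF. -/
def HasComponents (w : List ℕ) (p : ℕ) : Prop :=
  ∃ l : List (List ℕ), l.length = p ∧ (∀ c ∈ l, IsRGF c ∧ Connected c) ∧
    w = l.foldr rgfComp []

/-- Number of non-crossing RGFs of length `n` with `p` components avoiding `σ`. -/
noncomputable def ncCount (n p : ℕ) (σ : List ℕ) : ℕ :=
  {w : List ℕ | IsRGF w ∧ NonCrossing w ∧ w.length = n ∧ PatAvoids w σ ∧
    HasComponents w p}.ncard

/-- cc-equivalence of patterns. -/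
def ccEquiv (σ τ : List ℕ) : Prop := ∀ n p : ℕ, ncCount n p σ = ncCount n p τ

/-- Number of non-crossing RGFs of length `n` avoiding `σ`. -/
noncomputable def ncAvoidCount (n : ℕ) (σ : List ℕ) : ℕ :=
  {w : List ℕ | IsRGF w ∧ NonCrossing w ∧ w.length = n ∧ PatAvoids w σ}.ncard

/-- Auxiliary: builds `1[σ₁]1[σ₂]⋯1[σ_k]1` with accumulated letter shift `s`. -/
def onePatAux : ℕ → List (List ℕ) → List ℕ
  | _, [] => [1]
  | s, c :: rest => 1 :: (c.map (· + s) ++ onePatAux (s + nLetters c) rest)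

/-- The pattern `1[σ₁]1[σ₂]⋯1[σ_k]1`. -/
def onePat (l : List (List ℕ)) : List ℕ := onePatAux 1 l

/-- The pattern `1[σ]1[τ]`. -/
def pat2 (σ τ : List ℕ) : List ℕ :=
  1 :: (σ.map (· + 1) ++ 1 :: τ.map (· + (1 + nLetters σ)))

/-!
A nonempty non-crossing RGF `w` splits uniquely at its last `1` as `w = (v1)[u]` with `v` and `u`
non-crossing RGFs. Indeed, a letter `y` after the last `1` that does not exceed every letter
before it already occurs before it (as `w` is an RGF), and then `1 y 1 y` is a crossing.
An occurrence of a connected pattern cannot straddle such a value gap, so `w` avoids `1[σ]` iff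
`v` avoids `1[σ]` and `u` avoids `σ`. An occurrence of `τ1 = 1[ρ]1` begins and ends with the same
letter, so it cannot straddle the gap either, and `w` avoids `τ1` iff `v` avoids `τ` and `u`
avoids `τ1`. Hence the two counting sequences satisfy `a (n+1) = ∑_{i+j=n} a i * s j` and
`b (n+1) = ∑_{i+j=n} t i * b j`, where `s = t` count the avoiders of `σ` and of `τ`, and
`a = b` follows by induction.
-/

/-! ### Sublists and last occurrences -/

lemma List.Sublist.of_append_singleton_of_ne {α : Type*} {l v : List α} {b c : α}
    (h : (l ++ [b]).Sublist (v ++ [c])) (hbc : b ≠ c) : (l ++ [b]).Sublist v := by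
  rw [← List.reverse_sublist] at h ⊢
  simpa using (by simpa using h : (b :: l.reverse).Sublist (c :: v.reverse)).of_cons_of_ne hbc

lemma List.Sublist.of_append_singleton {α : Type*} {l v : List α} {b c : α}
    (h : (l ++ [b]).Sublist (v ++ [c])) : l.Sublist v := by
  by_cases hbc : b = c
  · exact (List.append_sublist_append_right _).1 (hbc ▸ h)
  · exact (List.sublist_append_left l [b]).trans (h.of_append_singleton_of_ne hbc)

lemma exists_eq_append_cons_notMem {α : Type*} {a : α} {w : List α} (h : a ∈ w) :
    ∃ v X, w = v ++ a :: X ∧ a ∉ X := by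
  induction w with
  | nil => simp at h
  | cons c w ih =>
    by_cases hw : a ∈ w
    · obtain ⟨v, X, rfl, hX⟩ := ih hw
      exact ⟨c :: v, X, rfl, hX⟩
    · obtain rfl : a = c := by simpa [hw] using h
      exact ⟨[], w, rfl, hw⟩

lemma eq_of_append_cons_eq_append_cons {α : Type*} {a : α} {v v' X X' : List α}
    (h : v ++ a :: X = v' ++ a :: X') (hX : a ∉ X) (hX' : a ∉ X') : v = v' ∧ X = X' := by
  induction v generalizing v' with
  | nil =>
    rcases v' with _ | ⟨c, v'⟩
    · simpa using h
    · simp only [List.nil_append, List.cons_append, List.cons.injEq] at h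
      exact absurd (h.2 ▸ List.mem_append_right _ (List.mem_cons_self ..)) hX
  | cons c v ih =>
    rcases v' with _ | ⟨c', v'⟩
    · simp only [List.nil_append, List.cons_append, List.cons.injEq] at h
      exact absurd (h.2 ▸ List.mem_append_right _ (List.mem_cons_self ..)) hX'
    · simp only [List.cons_append, List.cons.injEq] at h
      obtain ⟨rfl, h⟩ := h
      exact (ih h).imp_left (congrArg _)

/-! ### Letters and restricted growth functions -/

@[simp] lemma nLetters_nil : nLetters [] = 0 := rfl

@[simp] lemma nLetters_cons (c : ℕ) (w : List ℕ) : nLetters (c :: w) = max c (nLetters w) := rfl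

@[simp] lemma nLetters_append (a b : List ℕ) :
    nLetters (a ++ b) = max (nLetters a) (nLetters b) := by
  induction a with
  | nil => simp
  | cons c a ih => simp [ih, max_assoc]

lemma nLetters_le_iff {w : List ℕ} {B : ℕ} : nLetters w ≤ B ↔ ∀ x ∈ w, x ≤ B := by
  induction w with
  | nil => simp
  | cons c w ih => simp [ih]

lemma le_nLetters_of_mem {w : List ℕ} {x : ℕ} (hx : x ∈ w) : x ≤ nLetters w :=
  nLetters_le_iff.1 le_rfl x hx

lemma nLetters_mem {w : List ℕ} (hw : w ≠ []) : nLetters w ∈ w := by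
  induction w with
  | nil => contradiction
  | cons c w ih =>
    rcases eq_or_ne w [] with rfl | hw'
    · simp
    · rcases max_choice c (nLetters w) with h | h <;> simp [h, ih hw']

lemma nLetters_map_add {w : List ℕ} (hw : w ≠ []) (c : ℕ) :
    nLetters (w.map (· + c)) = nLetters w + c := by
  refine le_antisymm (nLetters_le_iff.2 ?_) (le_nLetters_of_mem ?_)
  · simpa using fun x hx => le_nLetters_of_mem hx
  · exact List.mem_map_of_mem (nLetters_mem hw)

lemma isRGF_iff {w : List ℕ} :
    IsRGF w ↔ (∀ x ∈ w, 1 ≤ x) ∧ ∀ i < w.length, w.getD i 0 ≤ nLetters (w.take i) + 1 := by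
  refine ⟨fun h => ⟨h.1, fun i hi => ?_⟩, fun h => ⟨h.1, fun hne => ?_, fun i hi => h.2 (i + 1) hi⟩⟩
  · cases i with
    | zero => rw [h.2.1 (List.ne_nil_of_length_pos hi)]; simp
    | succ i => exact h.2.2 i hi
  · have hpos := List.length_pos_of_ne_nil hne
    have hmem : w.getD 0 0 ∈ w := by
      rw [List.getD_eq_getElem _ _ hpos]
      exact List.getElem_mem hpos
    have h1 := h.1 _ hmem
    have h2 := h.2 0 hpos
    rw [List.take_zero, nLetters_nil] at h2
    omega

@[simp] lemma isRGF_nil : IsRGF [] := isRGF_iff.2 (by simp)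

lemma isRGF_append_singleton_iff {w : List ℕ} {c : ℕ} :
    IsRGF (w ++ [c]) ↔ IsRGF w ∧ 1 ≤ c ∧ c ≤ nLetters w + 1 := by
  have hprefix : ∀ i < w.length, (w ++ [c]).getD i 0 ≤ nLetters ((w ++ [c]).take i) + 1 ↔
      w.getD i 0 ≤ nLetters (w.take i) + 1 := fun i hi => by
    rw [List.getD_append _ _ _ _ hi, List.take_append_of_le_length hi.le]
  rw [isRGF_iff, isRGF_iff, List.length_append, List.length_singleton, Nat.forall_lt_succ_right,
    forall₂_congr hprefix, List.getD_append_right _ _ _ _ le_rfl, Nat.sub_self, List.take_left,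
    List.forall_mem_append]
  simp only [List.forall_mem_singleton, List.getD_cons_zero]
  tauto

lemma IsRGF.of_append {a b : List ℕ} (h : IsRGF (a ++ b)) : IsRGF a := by
  induction b using List.reverseRecOn with
  | nil => simpa using h
  | append_singleton b c ih =>
    exact ih (isRGF_append_singleton_iff.1 (by rwa [← List.append_assoc] at h)).1

lemma IsRGF.eq_one_of_cons {c : ℕ} {w : List ℕ} (h : IsRGF (c :: w)) : c = 1 := by
  have := (isRGF_append_singleton_iff (w := []) (c := c)).1 (IsRGF.of_append (a := [c]) h)
  simp at this
  omega

lemma IsRGF.mem_of_le_nLetters {w : List ℕ} {c : ℕ} (h : IsRGF w) (h1 : 1 ≤ c)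
    (hc : c ≤ nLetters w) : c ∈ w := by
  induction w using List.reverseRecOn with
  | nil => simp at hc; omega
  | append_singleton w d ih =>
    obtain ⟨hw, -, hd⟩ := isRGF_append_singleton_iff.1 h
    rw [nLetters_append] at hc
    by_cases hcw : c ≤ nLetters w
    · exact List.mem_append_left _ (ih hw hcw)
    · simp at hc
      simp
      omega

lemma IsRGF.nLetters_le_length {w : List ℕ} (h : IsRGF w) : nLetters w ≤ w.length := by
  induction w using List.reverseRecOn with
  | nil => simp
  | append_singleton w d ih =>
    obtain ⟨hw, -, hd⟩ := isRGF_append_singleton_iff.1 h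
    have := ih hw
    simp
    omega

lemma IsRGF.one_le_nLetters {w : List ℕ} (h : IsRGF w) (hw : w ≠ []) : 1 ≤ nLetters w :=
  h.1 _ (nLetters_mem hw)

lemma lt_of_mem_of_mem_map_add_nLetters {a b : List ℕ} (hb : ∀ y ∈ b, 1 ≤ y) {x y : ℕ}
    (hx : x ∈ a) (hy : y ∈ b.map (· + nLetters a)) : x < y := by
  obtain ⟨z, hz, rfl⟩ := List.mem_map.1 hy
  have := hb z hz
  have := le_nLetters_of_mem hx
  omega

lemma isRGF_rgfComp_iff {a b : List ℕ} (ha : IsRGF a) (hne : a ≠ []) (hb : ∀ y ∈ b, 1 ≤ y) :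
    IsRGF (rgfComp a b) ↔ IsRGF b := by
  have hN := ha.one_le_nLetters hne
  induction b using List.reverseRecOn with
  | nil => simpa [rgfComp] using ha
  | append_singleton b c ih =>
    have hc := hb c (by simp)
    have ih := ih fun y hy => hb y (List.mem_append_left _ hy)
    rw [show rgfComp a (b ++ [c]) = rgfComp a b ++ [c + nLetters a] by simp [rgfComp],
      isRGF_append_singleton_iff, isRGF_append_singleton_iff]
    refine and_congr ih ?_
    rcases eq_or_ne b [] with rfl | hb'
    · simp [rgfComp]
      omega
    · simp only [rgfComp, nLetters_append, nLetters_map_add hb']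
      have := (hb _ (List.mem_append_left _ (nLetters_mem hb')))
      omega

lemma exists_rgfComp_eq_append {a b : List ℕ} (h : IsRGF (a ++ b)) (ha : a ≠ [])
    (hgap : ∀ y ∈ b, nLetters a < y) : ∃ u, IsRGF u ∧ a ++ b = rgfComp a u := by
  have hb : b = (b.map (· - nLetters a)).map (· + nLetters a) := by
    rw [List.map_map, List.map_congr_left, List.map_id]
    intro y hy
    have := hgap y hy
    simp only [Function.comp_apply, id]
    omega
  refine ⟨b.map (· - nLetters a), ?_, by rw [rgfComp, ← hb]⟩
  refine (isRGF_rgfComp_iff h.of_append ha ?_).1 (by rwa [rgfComp, ← hb])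
  intro y hy
  obtain ⟨z, hz, rfl⟩ := List.mem_map.1 hy
  have := hgap z hz
  omega

/-! ### Order-isomorphic words and pattern containment -/

def SameOrder (p q : ℕ × ℕ) : Prop := (p.1 < q.1 ↔ p.2 < q.2) ∧ (q.1 < p.1 ↔ q.2 < p.2)

lemma wordOrdIso_iff_pairwise_zip {s t : List ℕ} :
    WordOrdIso s t ↔ s.length = t.length ∧ (s.zip t).Pairwise SameOrder := by
  refine ⟨fun ⟨hl, h⟩ => ⟨hl, List.pairwise_iff_getElem.2 fun i j hi hj _ => ?_⟩,
    fun ⟨hl, h⟩ => ⟨hl, fun i j hi hj => ?_⟩⟩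
  · simp only [List.length_zip, hl, min_self] at hi hj
    have hij := h i j (hl ▸ hi) (hl ▸ hj)
    have hji := h j i (hl ▸ hj) (hl ▸ hi)
    simp only [List.getD_eq_getElem?_getD, List.getElem?_eq_getElem hi,
      List.getElem?_eq_getElem hj, List.getElem?_eq_getElem (hl ▸ hi),
      List.getElem?_eq_getElem (hl ▸ hj), Option.getD_some] at hij hji
    exact ⟨by simpa using hij, by simpa using hji⟩
  · have hz : (s.zip t).length = s.length := by simp [hl]
    simp only [List.getD_eq_getElem _ _ hi, List.getD_eq_getElem _ _ hj,
      List.getD_eq_getElem _ _ (hl ▸ hi), List.getD_eq_getElem _ _ (hl ▸ hj)]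
    rcases lt_trichotomy i j with hij | rfl | hij
    · simpa using (List.pairwise_iff_getElem.1 h i j (hz ▸ hi) (hz ▸ hj) hij).1
    · simp
    · simpa using (List.pairwise_iff_getElem.1 h j i (hz ▸ hj) (hz ▸ hi) hij).2

lemma wordOrdIso_comm {s t : List ℕ} : WordOrdIso s t ↔ WordOrdIso t s :=
  ⟨fun h => ⟨h.1.symm, fun i j hi hj => (h.2 i j (h.1 ▸ hi) (h.1 ▸ hj)).symm⟩,
    fun h => ⟨h.1.symm, fun i j hi hj => (h.2 i j (h.1 ▸ hi) (h.1 ▸ hj)).symm⟩⟩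

lemma wordOrdIso_map_left {f : ℕ → ℕ} (hf : StrictMono f) {s t : List ℕ} :
    WordOrdIso (s.map f) t ↔ WordOrdIso s t := by
  simp only [wordOrdIso_iff_pairwise_zip, List.length_map, List.zip_map_left, List.pairwise_map,
    SameOrder, Prod.map_fst, Prod.map_snd, id, hf.lt_iff_lt]
  exact Iff.rfl

lemma wordOrdIso_map_right {f : ℕ → ℕ} (hf : StrictMono f) {s t : List ℕ} :
    WordOrdIso s (t.map f) ↔ WordOrdIso s t := by
  rw [wordOrdIso_comm, wordOrdIso_map_left hf, wordOrdIso_comm]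

lemma wordOrdIso_append_iff {s s' t t' : List ℕ} (h : s.length = t.length) :
    WordOrdIso (s ++ s') (t ++ t') ↔
      WordOrdIso s t ∧ WordOrdIso s' t' ∧ ∀ p ∈ s.zip t, ∀ q ∈ s'.zip t', SameOrder p q := by
  simp only [wordOrdIso_iff_pairwise_zip, List.zip_append h, List.pairwise_append,
    List.length_append, h, Nat.add_left_cancel_iff, true_and]
  tauto

lemma wordOrdIso_singleton (a b : ℕ) : WordOrdIso [a] [b] := by
  simp [wordOrdIso_iff_pairwise_zip]

lemma wordOrdIso_cons_iff {a b : ℕ} {s t : List ℕ} :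
    WordOrdIso (a :: s) (b :: t) ↔ WordOrdIso s t ∧ ∀ q ∈ s.zip t, SameOrder (a, b) q := by
  rw [← List.singleton_append, ← List.singleton_append (l := t), wordOrdIso_append_iff (s := [a]) (t := [b]) rfl]
  simp [wordOrdIso_singleton]

lemma PatContains.mono {w w' p : List ℕ} (h : PatContains w p) (hw : w.Sublist w') :
    PatContains w' p :=
  let ⟨s, hs, hiso⟩ := h
  ⟨s, hs.trans hw, hiso⟩

lemma patAvoids_nil {p : List ℕ} (hp : p ≠ []) : PatAvoids [] p := by
  rintro ⟨s, hs, hiso⟩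
  rw [List.sublist_nil] at hs
  subst hs
  exact hp (List.length_eq_zero_iff.1 hiso.1.symm)

lemma patContains_map_iff {f : ℕ → ℕ} (hf : StrictMono f) {w p : List ℕ} :
    PatContains (w.map f) p ↔ PatContains w p := by
  constructor
  · rintro ⟨s, hs, hiso⟩
    obtain ⟨s', hs', rfl⟩ := List.sublist_map_iff.1 hs
    exact ⟨s', hs', (wordOrdIso_map_left hf).1 hiso⟩
  · rintro ⟨s, hs, hiso⟩
    exact ⟨s.map f, hs.map f, (wordOrdIso_map_left hf).2 hiso⟩

lemma Connected.eq_nil_or_eq_nil_of_wordOrdIso_append {σ s₁ s₂ : List ℕ} (hσ : IsRGF σ)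
    (hσc : Connected σ) (hiso : WordOrdIso (s₁ ++ s₂) σ) (hgap : ∀ x ∈ s₁, ∀ y ∈ s₂, x < y) :
    s₁ = [] ∨ s₂ = [] := by
  by_contra! hne
  set σ₁ := σ.take s₁.length
  set σ₂ := σ.drop s₁.length
  have hσ₁₂ : σ₁ ++ σ₂ = σ := List.take_append_drop _ _
  have hlen : s₁.length = σ₁.length := by
    have := hiso.1
    simp only [List.length_append] at this
    simp [σ₁]
    omega
  obtain ⟨hiso₁, hiso₂, hcross⟩ := (wordOrdIso_append_iff hlen).1 (hσ₁₂ ▸ hiso)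
  have hgapσ : ∀ x ∈ σ₁, ∀ y ∈ σ₂, x < y := by
    intro x hx y hy
    rw [← List.map_snd_zip hiso₁.1.ge] at hx
    rw [← List.map_snd_zip hiso₂.1.ge] at hy
    obtain ⟨p, hp, rfl⟩ := List.mem_map.1 hx
    obtain ⟨q, hq, rfl⟩ := List.mem_map.1 hy
    exact (hcross p hp q hq).1.1 (hgap _ (List.of_mem_zip hp).1 _ (List.of_mem_zip hq).1)
  have hσ₁ne : σ₁ ≠ [] := List.ne_nil_of_length_pos (hlen ▸ List.length_pos_of_ne_nil hne.1)
  have hσ₂ne : σ₂ ≠ [] := List.ne_nil_of_length_pos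
    (hiso₂.1 ▸ List.length_pos_of_ne_nil hne.2)
  obtain ⟨u, hu, heq⟩ := exists_rgfComp_eq_append (hσ₁₂ ▸ hσ) hσ₁ne
    fun y hy => hgapσ _ (nLetters_mem hσ₁ne) y hy
  refine hσc.2 ⟨σ₁, u, (hσ₁₂ ▸ hσ).of_append, hu, hσ₁ne, ?_, by rw [← heq, hσ₁₂]⟩
  rintro rfl
  simp [rgfComp, hσ₂ne] at heq

lemma patContains_append_iff_of_connected {σ A B : List ℕ} (hσ : IsRGF σ) (hσc : Connected σ)
    (hgap : ∀ x ∈ A, ∀ y ∈ B, x < y) :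
    PatContains (A ++ B) σ ↔ PatContains A σ ∨ PatContains B σ := by
  refine ⟨fun ⟨s, hs, hiso⟩ => ?_, ?_⟩
  · obtain ⟨s₁, s₂, rfl, h₁, h₂⟩ := List.sublist_append_iff.1 hs
    rcases hσc.eq_nil_or_eq_nil_of_wordOrdIso_append hσ hiso
      (fun x hx y hy => hgap x (h₁.subset hx) y (h₂.subset hy)) with rfl | rfl
    · exact Or.inr ⟨s₂, h₂, hiso⟩
    · exact Or.inl ⟨s₁, h₁, by simpa using hiso⟩
  · rintro (h | h)
    · exact h.mono (List.sublist_append_left A B)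
    · exact h.mono (List.sublist_append_right A B)

/-! ### The patterns `1[ρ]` and `1[ρ]1` -/

lemma two_le_of_mem_map_add_one {ρ : List ℕ} (hρ : ∀ x ∈ ρ, 1 ≤ x) {y : ℕ}
    (hy : y ∈ ρ.map (· + 1)) : 2 ≤ y := by
  obtain ⟨x, hx, rfl⟩ := List.mem_map.1 hy
  exact Nat.succ_le_succ (hρ x hx)

lemma wordOrdIso_cons_oneBracket_iff {a : ℕ} {s ρ : List ℕ} (hρ : ∀ x ∈ ρ, 1 ≤ x) :
    WordOrdIso (a :: s) (1 :: ρ.map (· + 1)) ↔ (∀ x ∈ s, a < x) ∧ WordOrdIso s ρ := by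
  rw [wordOrdIso_cons_iff, wordOrdIso_map_right add_left_strictMono, and_comm]
  refine and_congr_left fun hiso => ⟨fun h x hx => ?_, fun h q hq => ?_⟩
  · rw [← List.map_fst_zip (l₁ := s) (l₂ := ρ.map (· + 1)) (by simp [hiso.1])] at hx
    obtain ⟨q, hq, rfl⟩ := List.mem_map.1 hx
    exact (h q hq).1.2 (two_le_of_mem_map_add_one hρ (List.of_mem_zip hq).2)
  · have := h _ (List.of_mem_zip hq).1
    have := two_le_of_mem_map_add_one hρ (List.of_mem_zip hq).2
    simp only [SameOrder]
    omega

lemma patContains_oneBracket_iff {w ρ : List ℕ} (hρ : ∀ x ∈ ρ, 1 ≤ x) :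
    PatContains w (1 :: ρ.map (· + 1)) ↔
      ∃ a s, (a :: s).Sublist w ∧ (∀ x ∈ s, a < x) ∧ WordOrdIso s ρ := by
  constructor
  · rintro ⟨_ | ⟨a, s⟩, hs, hiso⟩
    · simpa using hiso.1
    · exact ⟨a, s, hs, (wordOrdIso_cons_oneBracket_iff hρ).1 hiso⟩
  · rintro ⟨a, s, hs, h⟩
    exact ⟨a :: s, hs, (wordOrdIso_cons_oneBracket_iff hρ).2 h⟩

lemma wordOrdIso_oneBracket_append_one_iff {o ρ : List ℕ} (hρ : ∀ x ∈ ρ, 1 ≤ x) :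
    WordOrdIso o (1 :: ρ.map (· + 1) ++ [1]) ↔
      ∃ a s, o = a :: s ++ [a] ∧ (∀ x ∈ s, a < x) ∧ WordOrdIso s ρ := by
  constructor
  · intro h
    have hlen := h.1
    obtain ⟨_ | ⟨a, s⟩, b, rfl⟩ : ∃ o' b, o = o' ++ [b] := by
      rcases List.eq_nil_or_concat' o with rfl | h'
      · simp at hlen
      · exact h'
    · simp at hlen
    obtain ⟨hiso, -, hcross⟩ := (wordOrdIso_append_iff (by simpa using hlen)).1 h
    have hab := hcross (a, 1) (by simp) (b, 1) (by simp)
    simp only [SameOrder, lt_self_iff_false, iff_false, not_lt] at hab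
    obtain rfl : a = b := le_antisymm hab.2 hab.1
    exact ⟨a, s, rfl, (wordOrdIso_cons_oneBracket_iff hρ).1 hiso⟩
  · rintro ⟨a, s, rfl, hgt, hiso⟩
    refine (wordOrdIso_append_iff (by simpa using hiso.1)).2
      ⟨(wordOrdIso_cons_oneBracket_iff hρ).2 ⟨hgt, hiso⟩, wordOrdIso_singleton a 1, ?_⟩
    simp only [List.zip_cons_cons, List.mem_cons, List.zip_nil_right, List.not_mem_nil, or_false,
      forall_eq, forall_eq_or_imp]
    refine ⟨by simp [SameOrder], fun q hq => ?_⟩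
    have := hgt _ (List.of_mem_zip hq).1
    have := two_le_of_mem_map_add_one hρ (List.of_mem_zip hq).2
    simp only [SameOrder]
    omega

lemma patContains_oneBracket_append_one_iff {w ρ : List ℕ} (hρ : ∀ x ∈ ρ, 1 ≤ x) :
    PatContains w (1 :: ρ.map (· + 1) ++ [1]) ↔
      ∃ a s, (a :: s ++ [a]).Sublist w ∧ (∀ x ∈ s, a < x) ∧ WordOrdIso s ρ := by
  constructor
  · rintro ⟨o, ho, hiso⟩
    obtain ⟨a, s, rfl, h⟩ := (wordOrdIso_oneBracket_append_one_iff hρ).1 hiso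
    exact ⟨a, s, ho, h⟩
  · rintro ⟨a, s, hs, h⟩
    exact ⟨_, hs, (wordOrdIso_oneBracket_append_one_iff hρ).2 ⟨a, s, rfl, h⟩⟩

lemma patContains_append_oneBracket_iff {σ A B : List ℕ} (hσ : IsRGF σ) (hσc : Connected σ)
    (hA : A ≠ []) (hgap : ∀ x ∈ A, ∀ y ∈ B, x < y) :
    PatContains (A ++ B) (1 :: σ.map (· + 1)) ↔
      PatContains A (1 :: σ.map (· + 1)) ∨ PatContains B σ := by
  rw [patContains_oneBracket_iff hσ.1, patContains_oneBracket_iff hσ.1]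
  constructor
  · rintro ⟨a, s, hs, hgt, hiso⟩
    obtain ⟨_ | ⟨a', s₁⟩, s₂, heq, h₁, h₂⟩ := List.sublist_append_iff.1 hs
    · rw [List.nil_append] at heq
      exact Or.inr ⟨s, (List.sublist_cons_self a s).trans (heq ▸ h₂), hiso⟩
    · obtain ⟨rfl, rfl⟩ := List.cons_eq_cons.1 heq
      rcases hσc.eq_nil_or_eq_nil_of_wordOrdIso_append hσ hiso fun x hx y hy =>
          hgap x (h₁.subset (List.mem_cons_of_mem _ hx)) y (h₂.subset hy) with rfl | rfl
      · exact Or.inr ⟨s₂, h₂, hiso⟩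
      · exact Or.inl ⟨a, s₁, h₁, by simpa using hgt, by simpa using hiso⟩
  · rintro (⟨a, s, hs, hgt, hiso⟩ | ⟨s, hs, hiso⟩)
    · exact ⟨a, s, hs.trans (List.sublist_append_left A B), hgt, hiso⟩
    · obtain ⟨a, A', rfl⟩ := List.exists_cons_of_ne_nil hA
      exact ⟨a, s, List.cons_sublist_cons.2 (hs.trans (List.sublist_append_right A' B)),
        fun x hx => hgap a (by simp) x (hs.subset hx), hiso⟩

lemma patContains_append_one_oneBracket_iff {v σ : List ℕ} (hv : ∀ x ∈ v, 1 ≤ x) (hσ : IsRGF σ)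
    (hσne : σ ≠ []) :
    PatContains (v ++ [1]) (1 :: σ.map (· + 1)) ↔ PatContains v (1 :: σ.map (· + 1)) := by
  rw [patContains_oneBracket_iff hσ.1, patContains_oneBracket_iff hσ.1]
  refine ⟨fun ⟨a, s, hs, hgt, hiso⟩ => ⟨a, s, ?_, hgt, hiso⟩,
    fun ⟨a, s, hs, h⟩ => ⟨a, s, hs.trans (List.sublist_append_left v [1]), h⟩⟩
  obtain ⟨s, b, rfl⟩ : ∃ s' b, s = s' ++ [b] := by
    rcases List.eq_nil_or_concat' s with rfl | h
    · exact absurd (List.length_eq_zero_iff.1 hiso.1.symm) hσne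
    · exact h
  have ha : 1 ≤ a := by
    have := hs.subset (List.mem_cons_self ..)
    simp only [List.mem_append, List.mem_singleton] at this
    exact this.elim (hv a) (·.ge)
  have hb := hgt b (by simp)
  exact List.Sublist.of_append_singleton_of_ne (l := a :: s) hs (by omega)

lemma patContains_append_oneBracket_append_one_iff {ρ A B : List ℕ} (hρ : ∀ x ∈ ρ, 1 ≤ x)
    (hgap : ∀ x ∈ A, ∀ y ∈ B, x < y) :
    PatContains (A ++ B) (1 :: ρ.map (· + 1) ++ [1]) ↔
      PatContains A (1 :: ρ.map (· + 1) ++ [1]) ∨ PatContains B (1 :: ρ.map (· + 1) ++ [1]) := by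
  refine ⟨fun ⟨o, ho, hiso⟩ => ?_, ?_⟩
  · obtain ⟨o₁, o₂, rfl, h₁, h₂⟩ := List.sublist_append_iff.1 ho
    obtain ⟨a, s, heq, -⟩ := (wordOrdIso_oneBracket_append_one_iff hρ).1 hiso
    rcases o₁ with _ | ⟨b, o₁⟩
    · exact Or.inr ⟨o₂, h₂, hiso⟩
    rcases List.eq_nil_or_concat' o₂ with rfl | ⟨o₂, c, rfl⟩
    · exact Or.inl ⟨_, h₁, by simpa using hiso⟩
    -- an occurrence begins and ends with the same letter, so it cannot straddle the gap
    rw [← List.append_assoc] at heq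
    obtain ⟨hb, hc⟩ := List.append_inj' heq rfl
    obtain rfl : b = a := (List.cons_eq_cons.1 hb).1
    obtain rfl : c = b := by simpa using hc
    exact absurd (hgap c (h₁.subset (by simp)) c (h₂.subset (by simp))) (lt_irrefl c)
  · rintro (h | h)
    · exact h.mono (List.sublist_append_left A B)
    · exact h.mono (List.sublist_append_right A B)

lemma patContains_append_one_oneBracket_append_one_iff {v ρ : List ℕ} (hv : IsRGF v)
    (hρ : ∀ x ∈ ρ, 1 ≤ x) :
    PatContains (v ++ [1]) (1 :: ρ.map (· + 1) ++ [1]) ↔ PatContains v (1 :: ρ.map (· + 1)) := by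
  rw [patContains_oneBracket_append_one_iff hρ, patContains_oneBracket_iff hρ]
  refine ⟨fun ⟨a, s, hs, h⟩ => ⟨a, s, hs.of_append_singleton, h⟩, ?_⟩
  rintro ⟨a, s, hs, hgt, hiso⟩
  obtain ⟨c, v', rfl⟩ := List.exists_cons_of_ne_nil (List.ne_nil_of_mem (hs.subset (List.mem_cons_self ..)))
  obtain rfl := hv.eq_one_of_cons
  have ha := hv.1 a (hs.subset (List.mem_cons_self ..))
  refine ⟨1, s, (List.append_sublist_append_right [1]).2 (List.cons_sublist_cons.2 hs.tail),
    fun x hx => (hgt x hx).trans_le' ha, hiso⟩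

/-! ### Non-crossing words -/

lemma isRGF_1212 : IsRGF [1, 2, 1, 2] := isRGF_iff.2 ⟨by decide, by decide⟩

lemma connected_1212 : Connected [1, 2, 1, 2] := by
  refine ⟨by simp, ?_⟩
  rintro ⟨a, b, -, hb, hane, hbne, h⟩
  have key : ∀ x ∈ a, x ∉ b.map (· + nLetters a) := fun x hx hx' =>
    lt_irrefl x (lt_of_mem_of_mem_map_add_nLetters hb.1 hx hx')
  have hB : b.map (· + nLetters a) ≠ [] := by simpa using hbne
  rw [rgfComp] at h
  generalize b.map (· + nLetters a) = B at h key hB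
  rcases a with _ | ⟨x₁, _ | ⟨x₂, _ | ⟨x₃, _ | ⟨x₄, a⟩⟩⟩⟩ <;>
    simp only [List.cons_append, List.nil_append, List.cons.injEq] at h
  · exact hane rfl
  · exact key 1 (by simp [h.1]) (by simp [← h.2])
  · exact key 1 (by simp [h.1]) (by simp [← h.2.2])
  · exact key 2 (by simp [h.2.1]) (by simp [← h.2.2.2])
  · exact hB (List.append_eq_nil_iff.1 h.2.2.2.2.symm).2

lemma not_nonCrossing_of_sublist {w : List ℕ} {x y : ℕ} (hxy : x < y)
    (h : [x, y, x, y].Sublist w) : ¬ NonCrossing w :=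
  fun hw => hw ⟨_, h, by simp [wordOrdIso_iff_pairwise_zip, SameOrder]; omega⟩

lemma nonCrossing_append_iff {A B : List ℕ} (hgap : ∀ x ∈ A, ∀ y ∈ B, x < y) :
    NonCrossing (A ++ B) ↔ NonCrossing A ∧ NonCrossing B := by
  rw [NonCrossing, PatAvoids, patContains_append_iff_of_connected isRGF_1212 connected_1212 hgap,
    not_or]
  rfl

lemma nonCrossing_map_iff {f : ℕ → ℕ} (hf : StrictMono f) {w : List ℕ} :
    NonCrossing (w.map f) ↔ NonCrossing w :=
  not_congr (patContains_map_iff hf)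

lemma nonCrossing_append_one_iff {v : List ℕ} (hv : ∀ x ∈ v, 1 ≤ x) :
    NonCrossing (v ++ [1]) ↔ NonCrossing v := by
  refine ⟨fun h hv' => h (hv'.mono (List.sublist_append_left v [1])), fun h => ?_⟩
  rintro ⟨o, hs, hiso⟩
  obtain ⟨x, y, z, t, rfl⟩ := List.length_eq_four.1 hiso.1
  have hxt := (hiso.2 0 3 (by simp) (by simp)).2 (by simp)
  have hx : 1 ≤ x := by
    have := hs.subset (List.mem_cons_self ..)
    simp only [List.mem_append, List.mem_singleton] at this
    exact this.elim (hv x) (·.ge)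
  exact h ⟨_, List.Sublist.of_append_singleton_of_ne (l := [x, y, z]) hs (by simp at hxt; omega),
    hiso⟩

/-! ### Splitting at the last `1` -/

lemma IsRGF.rgfComp_append_one {v u : List ℕ} (hv : IsRGF v) (hu : IsRGF u) :
    IsRGF (rgfComp (v ++ [1]) u) :=
  (isRGF_rgfComp_iff (isRGF_append_singleton_iff.2 ⟨hv, le_rfl, by omega⟩) (by simp) hu.1).2 hu

lemma exists_eq_rgfComp_append_one {w : List ℕ} (hw : IsRGF w) (hwnc : NonCrossing w)
    (hne : w ≠ []) : ∃ v u, IsRGF v ∧ IsRGF u ∧ w = rgfComp (v ++ [1]) u := by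
  obtain ⟨v, X, rfl, hX⟩ := exists_eq_append_cons_notMem (a := 1) (w := w) <| by
    obtain ⟨c, w, rfl⟩ := List.exists_cons_of_ne_nil hne
    simp [hw.eq_one_of_cons]
  have hv : IsRGF v := hw.of_append
  have hgap : ∀ y ∈ X, nLetters (v ++ [1]) < y := by
    intro y hy
    have hy1 : 1 < y := lt_of_le_of_ne (hw.1 y (by simp [hy])) fun h => hX (h ▸ hy)
    by_contra! hyv
    have hyv : y ∈ v := hv.mem_of_le_nLetters hy1.le (by simp at hyv; omega)
    obtain ⟨c, v', rfl⟩ := List.exists_cons_of_ne_nil (List.ne_nil_of_mem hyv)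
    obtain rfl := hv.eq_one_of_cons
    have hyv' : y ∈ v' := by simpa [hy1.ne'] using hyv
    -- `1 y` inside `v`, followed by the last `1` and `y`
    refine not_nonCrossing_of_sublist hy1 ?_ hwnc
    exact (List.cons_sublist_cons.2 (List.singleton_sublist.2 hyv')).append
      (List.cons_sublist_cons.2 (List.singleton_sublist.2 hy))
  obtain ⟨u, hu, heq⟩ := exists_rgfComp_eq_append (by simpa using hw) (by simp) hgap
  exact ⟨v, u, hv, hu, by simpa using heq⟩

lemma rgfComp_append_one_inj {v v' u u' : List ℕ} (hu : ∀ x ∈ u, 1 ≤ x) (hu' : ∀ x ∈ u', 1 ≤ x)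
    (h : rgfComp (v ++ [1]) u = rgfComp (v' ++ [1]) u') : v = v' ∧ u = u' := by
  have hnotMem : ∀ {v u : List ℕ}, (∀ x ∈ u, 1 ≤ x) → 1 ∉ u.map (· + nLetters (v ++ [1])) :=
    fun hu h1 => lt_irrefl 1 (lt_of_mem_of_mem_map_add_nLetters hu (by simp) h1)
  simp only [rgfComp, List.append_assoc, List.singleton_append] at h
  obtain ⟨rfl, h⟩ := eq_of_append_cons_eq_append_cons h (hnotMem hu) (hnotMem hu')
  exact ⟨rfl, List.map_injective_iff.2 (add_left_injective _) h⟩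

lemma nonCrossing_rgfComp_append_one_iff {v u : List ℕ} (hv : ∀ x ∈ v, 1 ≤ x)
    (hu : ∀ x ∈ u, 1 ≤ x) :
    NonCrossing (rgfComp (v ++ [1]) u) ↔ NonCrossing v ∧ NonCrossing u := by
  rw [rgfComp, nonCrossing_append_iff fun x hx y hy => lt_of_mem_of_mem_map_add_nLetters hu hx hy,
    nonCrossing_append_one_iff hv, nonCrossing_map_iff add_left_strictMono]

lemma patAvoids_rgfComp_append_one_oneBracket_iff {σ v u : List ℕ} (hσ : IsRGF σ)
    (hσc : Connected σ) (hv : ∀ x ∈ v, 1 ≤ x) (hu : ∀ x ∈ u, 1 ≤ x) :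
    PatAvoids (rgfComp (v ++ [1]) u) (1 :: σ.map (· + 1)) ↔
      PatAvoids v (1 :: σ.map (· + 1)) ∧ PatAvoids u σ := by
  rw [PatAvoids, rgfComp, patContains_append_oneBracket_iff hσ hσc (by simp)
      fun x hx y hy => lt_of_mem_of_mem_map_add_nLetters hu hx hy,
    patContains_append_one_oneBracket_iff hv hσ hσc.1, patContains_map_iff add_left_strictMono,
    not_or]
  rfl

lemma patAvoids_rgfComp_append_one_oneBracket_append_one_iff {ρ v u : List ℕ}
    (hρ : ∀ x ∈ ρ, 1 ≤ x) (hv : IsRGF v) (hu : ∀ x ∈ u, 1 ≤ x) :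
    PatAvoids (rgfComp (v ++ [1]) u) (1 :: ρ.map (· + 1) ++ [1]) ↔
      PatAvoids v (1 :: ρ.map (· + 1)) ∧ PatAvoids u (1 :: ρ.map (· + 1) ++ [1]) := by
  rw [PatAvoids, rgfComp, patContains_append_oneBracket_append_one_iff hρ
      fun x hx y hy => lt_of_mem_of_mem_map_add_nLetters hu hx hy,
    patContains_append_one_oneBracket_append_one_iff hv hρ, patContains_map_iff add_left_strictMono,
    not_or]
  rfl

/-! ### Counting -/

def ncAvoidSet (n : ℕ) (p : List ℕ) : Set (List ℕ) :=
  {w | IsRGF w ∧ NonCrossing w ∧ w.length = n ∧ PatAvoids w p}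

lemma ncAvoidCount_eq_ncard (n : ℕ) (p : List ℕ) : ncAvoidCount n p = (ncAvoidSet n p).ncard :=
  rfl

lemma finite_ncAvoidSet (n : ℕ) (p : List ℕ) : (ncAvoidSet n p).Finite := by
  refine ((List.finite_length_eq (Fin (n + 1)) n).image (List.map Fin.val)).subset ?_
  rintro w ⟨hw, -, hlen, -⟩
  have hle : ∀ x ∈ w, x < n + 1 := fun x hx =>
    Nat.lt_succ_of_le (hlen ▸ (le_nLetters_of_mem hx).trans hw.nLetters_le_length)
  lift w to List (Fin (n + 1)) using hle
  exact ⟨w, by simpa using hlen, rfl⟩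

lemma ncAvoidCount_zero {p : List ℕ} (hp : p ≠ []) : ncAvoidCount 0 p = 1 := by
  rw [ncAvoidCount_eq_ncard, Set.ncard_eq_one]
  refine ⟨[], Set.eq_singleton_iff_unique_mem.2 ⟨⟨isRGF_nil, patAvoids_nil (by simp), rfl,
    patAvoids_nil hp⟩, fun w hw => List.length_eq_zero_iff.1 hw.2.2.1⟩⟩

lemma mem_ncAvoidSet_succ_iff {W P Q : List ℕ} (hWPQ : ∀ v u, IsRGF v → IsRGF u →
      (PatAvoids (rgfComp (v ++ [1]) u) W ↔ PatAvoids v P ∧ PatAvoids u Q)) {n : ℕ} {w : List ℕ} :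
    w ∈ ncAvoidSet (n + 1) W ↔ ∃ v u, v.length + u.length = n ∧ v ∈ ncAvoidSet v.length P ∧
      u ∈ ncAvoidSet u.length Q ∧ rgfComp (v ++ [1]) u = w := by
  constructor
  · rintro ⟨hw, hwnc, hlen, hwW⟩
    obtain ⟨v, u, hv, hu, rfl⟩ := exists_eq_rgfComp_append_one hw hwnc
      (List.ne_nil_of_length_pos (by omega))
    obtain ⟨hvnc, hunc⟩ := (nonCrossing_rgfComp_append_one_iff hv.1 hu.1).1 hwnc
    obtain ⟨hvP, huQ⟩ := (hWPQ v u hv hu).1 hwW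
    refine ⟨v, u, ?_, ⟨hv, hvnc, rfl, hvP⟩, ⟨hu, hunc, rfl, huQ⟩, rfl⟩
    simp [rgfComp] at hlen
    omega
  · rintro ⟨v, u, hlen, ⟨hv, hvnc, -, hvP⟩, ⟨hu, hunc, -, huQ⟩, rfl⟩
    refine ⟨hv.rgfComp_append_one hu, (nonCrossing_rgfComp_append_one_iff hv.1 hu.1).2
      ⟨hvnc, hunc⟩, ?_, (hWPQ v u hv hu).2 ⟨hvP, huQ⟩⟩
    simp [rgfComp]
    omega

open Finset in
lemma ncAvoidCount_succ {W P Q : List ℕ} (hWPQ : ∀ v u, IsRGF v → IsRGF u →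
      (PatAvoids (rgfComp (v ++ [1]) u) W ↔ PatAvoids v P ∧ PatAvoids u Q)) (n : ℕ) :
    ncAvoidCount (n + 1) W = ∑ p ∈ antidiagonal n, ncAvoidCount p.1 P * ncAvoidCount p.2 Q := by
  classical
  let S (m : ℕ) (p : List ℕ) : Finset (List ℕ) := (finite_ncAvoidSet m p).toFinset
  have hS : ∀ m p, ncAvoidCount m p = (S m p).card := fun m p =>
    (ncAvoidCount_eq_ncard m p).trans (Set.ncard_eq_toFinset_card _ _)
  let pairs := (antidiagonal n).sigma fun p => S p.1 P ×ˢ S p.2 Q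
  let glue (x : Σ _ : ℕ × ℕ, List ℕ × List ℕ) : List ℕ := rgfComp (x.2.1 ++ [1]) x.2.2
  have himage : S (n + 1) W = pairs.image glue := by
    ext w
    simp only [S, pairs, glue, Set.Finite.mem_toFinset, mem_ncAvoidSet_succ_iff hWPQ, mem_image,
      mem_sigma, mem_product, HasAntidiagonal.mem_antidiagonal, Sigma.exists, Prod.exists]
    constructor
    · rintro ⟨v, u, hlen, hv, hu, rfl⟩
      exact ⟨v.length, u.length, v, u, ⟨hlen, hv, hu⟩, rfl⟩
    · rintro ⟨i, j, v, u, ⟨hij, hv, hu⟩, rfl⟩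
      exact ⟨v, u, hv.2.2.1 ▸ hu.2.2.1 ▸ hij, hv.2.2.1 ▸ hv, hu.2.2.1 ▸ hu, rfl⟩
  have hinj : Set.InjOn glue pairs := by
    rintro ⟨p, v, u⟩ hx ⟨p', v', u'⟩ hx' h
    simp only [pairs, S, coe_sigma, Set.mem_sigma_iff, mem_coe, mem_product,
      Set.Finite.mem_toFinset] at hx hx'
    obtain ⟨rfl, rfl⟩ := rgfComp_append_one_inj hx.2.2.1.1 hx'.2.2.1.1 h
    obtain ⟨rfl, rfl⟩ : p = p' := Prod.ext (hx.2.1.2.2.1.symm.trans hx'.2.1.2.2.1)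
      (hx.2.2.2.2.1.symm.trans hx'.2.2.2.2.1)
    rfl
  rw [hS, himage, card_image_of_injOn hinj, card_sigma]
  simp_rw [card_product, hS]

theorem stmt12_general (σ τ : List ℕ)
    (hσ : IsRGF σ) (hσc : Connected σ)
    (hform : ∃ ρ : List ℕ, IsRGF ρ ∧ τ = 1 :: ρ.map (· + 1))
    (h : ∀ n : ℕ, ncAvoidCount n σ = ncAvoidCount n τ) :
    ∀ n : ℕ, ncAvoidCount n (1 :: σ.map (· + 1)) = ncAvoidCount n (τ ++ [1]) := by
  obtain ⟨ρ, hρ, rfl⟩ := hform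
  intro n
  induction n using Nat.strong_induction_on with
  | _ n ih =>
    cases n with
    | zero => rw [ncAvoidCount_zero (by simp), ncAvoidCount_zero (by simp)]
    | succ n =>
      rw [ncAvoidCount_succ (fun v u hv hu =>
          patAvoids_rgfComp_append_one_oneBracket_iff hσ hσc hv.1 hu.1),
        ncAvoidCount_succ (fun v u hv hu =>
          patAvoids_rgfComp_append_one_oneBracket_append_one_iff hρ.1 hv hu.1),
        ← Finset.Nat.sum_antidiagonal_swap]
      refine Finset.sum_congr rfl fun p hp => ?_
      have := Finset.HasAntidiagonal.mem_antidiagonal.1 hp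
      rw [Prod.fst_swap, Prod.snd_swap, ih p.2 (by omega), h p.1, Nat.mul_comm]

/-- Theorem 3.8: if `σ` is connected, `τ = 1[ρ]`, and `σ ≃nc τ`, then
`1[σ] ≃nc τ1`. -/
theorem stmt12 (σ τ : List ℕ)
    (hσ : IsRGF σ) (hσnc : NonCrossing σ) (hσc : Connected σ)
    (hτ : IsRGF τ) (hτnc : NonCrossing τ)
    (hform : ∃ ρ : List ℕ, IsRGF ρ ∧ τ = 1 :: ρ.map (· + 1))
    (h : ∀ n : ℕ, ncAvoidCount n σ = ncAvoidCount n τ) :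
    ∀ n : ℕ, ncAvoidCount n (1 :: σ.map (· + 1)) = ncAvoidCount n (τ ++ [1]) :=
  stmt12_general σ τ hσ hσc hform h
end

section
/- Let k ≥ 1 and a ≥ 1, and let ρ be the pattern 12⋯(k−1)k^a, i.e., the strictly increasing word 1,2,…,k followed by a−1 further copies of k. Suppose the patterns σ and τ are strongly partition equivalent. Then for every n, p_n(ρ, σ) = p_n(ρ, τ). -/
/-- The strictly increasing pattern `1 2 ⋯ r`. -/
def incPat (r : ℕ) : List ℕ := (List.range r).map (· + 1)

/-- Strong partition equivalence: for every `n` there is a bijection between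
`σ`-avoiding and `τ`-avoiding RGFs of length `n` preserving the multiplicity of
every letter (equivalently, the size of every block). -/
def StrongPartEquiv (σ τ : List ℕ) : Prop :=
  ∀ n : ℕ, ∃ f : {w : List ℕ // IsRGF w ∧ w.length = n ∧ PatAvoids w σ} ≃
      {w : List ℕ // IsRGF w ∧ w.length = n ∧ PatAvoids w τ},
    ∀ w, ∀ i : ℕ, ((f w : List ℕ).count i) = ((w : List ℕ).count i)

/-!
In a restricted growth function every occurrence of a letter `m` is preceded by the first
occurrences of `1, 2, …, m - 1`, in this order. Hence an RGF contains `12⋯k^a` exactly when some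
block with label at least `k` has at least `a` elements, a condition on the block sizes alone; a
bijection preserving the block sizes therefore restricts to the `12⋯k^a`-avoiding words.
-/

theorem List.foldr_max_append_singleton (w : List ℕ) (x : ℕ) :
    (w ++ [x]).foldr max 0 = max (w.foldr max 0) x := by
  induction w with
  | nil => simp
  | cons y w ih => simp only [List.cons_append, List.foldr_cons, ih, max_assoc]

theorem incPat_succ (n : ℕ) : incPat (n + 1) = incPat n ++ [n + 1] := by
  simp [incPat, List.range_succ]

theorem incPat_add (m k : ℕ) : incPat (m + k) = incPat m ++ (incPat k).map (m + ·) := by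
  simp [incPat, List.range_add, Function.comp_def, add_assoc]

theorem wordOrdIso_map_add (c : ℕ) (t : List ℕ) : WordOrdIso (t.map (c + ·)) t := by
  refine ⟨List.length_map _, fun i j hi hj => ?_⟩
  rw [List.length_map] at hi hj
  simp only [List.getD_eq_getElem _ _ hi, List.getD_eq_getElem _ _ hj,
    List.getD_eq_getElem _ _ (List.length_map _ ▸ hi),
    List.getD_eq_getElem _ _ (List.length_map _ ▸ hj), List.getElem_map]
  omega

namespace IsRGF

variable {w : List ℕ} {x : ℕ}

theorem of_append_singleton (hw : IsRGF (w ++ [x])) : IsRGF w := by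
  obtain ⟨hpos, hfirst, hstep⟩ := hw
  refine ⟨fun y hy => hpos y (by simp [hy]), fun hne => ?_, fun i hi => ?_⟩
  · rw [← List.getD_append _ [x] _ _ (List.length_pos_of_ne_nil hne)]
    exact hfirst (by simp)
  · have := hstep i (by simp; omega)
    rwa [List.getD_append _ _ _ _ hi, List.take_append_of_le_length hi.le] at this

theorem le_foldr_max_add_one_of_append_singleton (hw : IsRGF (w ++ [x])) :
    x ≤ w.foldr max 0 + 1 := by
  rcases Nat.eq_zero_or_pos w.length with hnil | hpos
  · obtain rfl := List.length_eq_zero_iff.1 hnil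
    simpa using (hw.2.1 (by simp)).le
  · have := hw.2.2 (w.length - 1) (by simp; omega)
    rwa [Nat.sub_add_cancel hpos, List.getD_append_right _ _ _ _ le_rfl, Nat.sub_self,
      List.take_left] at this

theorem incPat_append_replicate_count_sublist (hw : IsRGF w) {j : ℕ}
    (hj : j ≤ w.foldr max 0) :
    (incPat j ++ List.replicate (w.count (j + 1)) (j + 1)).Sublist w := by
  induction w using List.reverseRecOn generalizing j with
  | nil =>
    obtain rfl : j = 0 := by simpa using hj
    simp [incPat]
  | append_singleton w x ih =>
    have hw' := hw.of_append_singleton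
    have hx := hw.le_foldr_max_add_one_of_append_singleton
    rw [List.foldr_max_append_singleton] at hj
    rw [List.count_append, List.count_singleton]
    by_cases hjx : x = j + 1
    · subst hjx
      rw [if_pos (beq_self_eq_true _), List.replicate_succ', ← List.append_assoc]
      exact (ih hw' (by omega)).append (List.Sublist.refl _)
    rw [if_neg (by simpa using hjx), Nat.add_zero]
    by_cases hjw : j ≤ w.foldr max 0
    · exact (ih hw' hjw).trans (List.sublist_append_left _ _)
    -- otherwise `x = j` is a new maximum, and `j + 1` does not occur yet
    obtain ⟨i, rfl⟩ : ∃ i, j = i + 1 := ⟨j - 1, by omega⟩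
    obtain rfl : x = i + 1 := by omega
    have hcount : w.count (i + 2) = 0 :=
      List.count_eq_zero.2 fun hmem => by
        have : i + 2 ≤ w.foldr max ⊥ := List.le_max_of_le hmem le_rfl
        exact hjw (Nat.le_of_succ_le this)
    rw [hcount, List.replicate_zero, List.append_nil, incPat_succ]
    exact ((List.sublist_append_left _ _).trans (ih hw' (by omega))).append (List.Sublist.refl _)

end IsRGF

theorem getD_incPat_append_replicate {k : ℕ} (hk : 1 ≤ k) (b : ℕ) {i : ℕ} (hi : i < k + b) :
    (incPat k ++ List.replicate b k).getD i 0 = min i (k - 1) + 1 := by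
  have hlen : (incPat k).length = k := by simp [incPat]
  rcases lt_or_ge i k with hik | hki
  · rw [List.getD_append _ _ _ _ (by omega), List.getD_eq_getElem _ _ (by omega)]
    simp only [incPat, List.getElem_map, List.getElem_range]
    omega
  · rw [List.getD_append_right _ _ _ _ (by omega), hlen,
      List.getD_eq_getElem _ _ (by simp; omega), List.getElem_replicate]
    omega

theorem exists_le_lt_count_of_patContains {w : List ℕ} (hpos : ∀ x ∈ w, 1 ≤ x) {k b : ℕ}
    (hk : 1 ≤ k) (h : PatContains w (incPat k ++ List.replicate b k)) :
    ∃ m, k ≤ m ∧ b < w.count m := by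
  obtain ⟨s, hsw, hlen, hiso⟩ := h
  simp only [List.length_append, List.length_replicate, incPat, List.length_map,
    List.length_range] at hlen
  have hlt : ∀ i j, i < k + b → j < k + b →
      (s.getD i 0 < s.getD j 0 ↔ min i (k - 1) < min j (k - 1)) := fun i j hi hj => by
    rw [hiso i j (by omega) (by omega), getD_incPat_append_replicate hk b hi,
      getD_incPat_append_replicate hk b hj, Nat.add_lt_add_iff_right]
  set m := s.getD (k - 1) 0
  have hinc : ∀ i ≤ k - 1, i + 1 ≤ s.getD i 0 := by
    intro i hi
    induction i with
    | zero =>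
      rw [List.getD_eq_getElem _ _ (by omega)]
      exact hpos _ (hsw.subset (List.getElem_mem _))
    | succ i ih => have := (hlt i (i + 1) (by omega) (by omega)).2 (by omega); omega
  have hconst : ∀ i, k - 1 ≤ i → i < k + b → s.getD i 0 = m := fun i hi hi' => by
    have := hlt i (k - 1) hi' (by omega)
    have := hlt (k - 1) i (by omega) hi'
    omega
  have htail : s.drop (k - 1) = List.replicate (b + 1) m := by
    refine List.eq_replicate_iff.2 ⟨by simp; omega, fun x hx => ?_⟩
    obtain ⟨i, hi, rfl⟩ := List.getElem_of_mem hx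
    rw [List.length_drop] at hi
    rw [List.getElem_drop, ← List.getD_eq_getElem _ 0]
    exact hconst _ (by omega) (by omega)
  refine ⟨m, by have := hinc (k - 1) le_rfl; omega, ?_⟩
  calc b < (s.drop (k - 1)).count m := by simp [htail]
    _ ≤ s.count m := (List.drop_sublist _ _).count_le m
    _ ≤ w.count m := hsw.count_le m

open List in
theorem IsRGF.patContains_incPat_append_replicate {w : List ℕ} (hw : IsRGF w) {k b m : ℕ}
    (hkm : k ≤ m) (hm : b < w.count m) : PatContains w (incPat k ++ List.replicate b k) := by
  have hmem : m ∈ w := List.count_pos_iff.1 (by omega)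
  obtain ⟨j, rfl⟩ : ∃ j, m = j + 1 := ⟨m - 1, by have := hw.1 m hmem; omega⟩
  have hj : j ≤ w.foldr max 0 := by
    have : j + 1 ≤ w.foldr max ⊥ := List.le_max_of_le hmem le_rfl
    exact Nat.le_of_succ_le this
  refine ⟨(incPat k ++ List.replicate b k).map (j + 1 - k + ·), ?_, wordOrdIso_map_add _ _⟩
  calc (incPat k ++ List.replicate b k).map (j + 1 - k + ·)
      = (incPat k).map (j + 1 - k + ·) ++ List.replicate b (j + 1) := by
        simp [List.map_replicate]; omega
    _ <+ incPat (j + 1 - k) ++ (incPat k).map (j + 1 - k + ·) ++ List.replicate b (j + 1) :=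
        (List.sublist_append_right _ _).append (List.Sublist.refl _)
    _ = incPat j ++ List.replicate (b + 1) (j + 1) := by
        rw [← incPat_add, Nat.sub_add_cancel hkm, incPat_succ, List.replicate_succ,
          List.append_assoc, List.singleton_append]
    _ <+ incPat j ++ List.replicate (w.count (j + 1)) (j + 1) :=
        (List.Sublist.refl _).append ((List.replicate_sublist_replicate _).2 hm)
    _ <+ w := hw.incPat_append_replicate_count_sublist hj

theorem IsRGF.patContains_incPat_append_replicate_iff {w : List ℕ} (hw : IsRGF w) {k b : ℕ}
    (hk : 1 ≤ k) :
    PatContains w (incPat k ++ List.replicate b k) ↔ ∃ m, k ≤ m ∧ b < w.count m :=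
  ⟨exists_le_lt_count_of_patContains hw.1 hk, fun ⟨_, hkm, hm⟩ =>
    hw.patContains_incPat_append_replicate hkm hm⟩

theorem pCount_pair (n : ℕ) (ρ σ : List ℕ) :
    pCount n {ρ, σ} =
      {w : List ℕ | (IsRGF w ∧ w.length = n ∧ PatAvoids w σ) ∧ PatAvoids w ρ}.ncard := by
  unfold pCount
  congr 1
  ext w
  simp only [Set.mem_ofPred_eq, Set.mem_insert_iff, Set.mem_singleton_iff, forall_eq_or_imp,
    forall_eq]
  tauto

theorem StrongPartEquiv.pCount_pair_eq {ρ σ τ : List ℕ} (h : StrongPartEquiv σ τ)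
    (hρ : ∀ u v, IsRGF u → IsRGF v → (∀ i, v.count i = u.count i) →
      PatAvoids u ρ → PatAvoids v ρ) (n : ℕ) :
    pCount n {ρ, σ} = pCount n {ρ, τ} := by
  obtain ⟨f, hf⟩ := h n
  rw [pCount_pair, pCount_pair, ← Nat.card_coe_set_eq, ← Nat.card_coe_set_eq]
  refine Nat.card_congr <| (Equiv.subtypeSubtypeEquivSubtypeInter _ _).symm.trans <|
    (f.subtypeEquiv fun w => ⟨hρ _ _ w.2.1 (f w).2.1 (hf w), ?_⟩).trans
      (Equiv.subtypeSubtypeEquivSubtypeInter _ _)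
  exact hρ _ _ (f w).2.1 w.2.1 fun i => (hf w i).symm

theorem stmt14_general (k a : ℕ) (hk : 1 ≤ k) (σ τ : List ℕ)
    (h : StrongPartEquiv σ τ) :
    ∀ n : ℕ, pCount n {incPat k ++ List.replicate (a - 1) k, σ}
      = pCount n {incPat k ++ List.replicate (a - 1) k, τ} := by
  refine h.pCount_pair_eq fun u v hu hv hcount hu_avoids hv_contains => hu_avoids ?_
  obtain ⟨m, hkm, hm⟩ := (hv.patContains_incPat_append_replicate_iff hk).1 hv_contains
  exact (hu.patContains_incPat_append_replicate_iff hk).2 ⟨m, hkm, hcount m ▸ hm⟩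

/-- Theorem 4.9: if `ρ = 12⋯(k-1)k^a` and `σ, τ` are strongly partition
equivalent, then the pairs `(ρ, σ)` and `(ρ, τ)` are Wilf-equivalent. -/
theorem stmt14 (k a : ℕ) (hk : 1 ≤ k) (ha : 1 ≤ a) (σ τ : List ℕ)
    (hσ : IsRGF σ) (hτ : IsRGF τ) (h : StrongPartEquiv σ τ) :
    ∀ n : ℕ, pCount n {incPat k ++ List.replicate (a - 1) k, σ}
      = pCount n {incPat k ++ List.replicate (a - 1) k, τ} :=
  stmt14_general k a hk σ τ h
end
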